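/- arXiv:1903.00227 — 6 statements merged into one kernel-verified Lean document; each statement's English description precedes it below -/
import Mathlib

section
/- Let w_1,…,w_n be positive reals with W = ∑ w_i, let ℓ ≥ 1 be an integer, and let X = ∑_{i=1}^n (1 - (1 - w_i/W)^ℓ) be the expected number of distinct items in a sample of size ℓ drawn with replacement (item i chosen with probability w_i/W in each trial). Define t_ℓ = ℓ·∑_{i : w_i < W/ℓ} (w_i/W) + |{i : w_i/W ≥ 1/ℓ}|. Then (1 - 1/e)·t_ℓ ≤ X ≤ t_ℓ. -/
open scoped Classical

lemma aux_term (ℓ : ℕ) (hℓ : 1 ≤ ℓ) (p : ℝ) (hp0 : 0 < p) (hp1 : p ≤ 1) :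
    (1 - 1 / Real.exp 1) * (if p < 1 / (ℓ:ℝ) then (ℓ:ℝ) * p else 1) ≤ 1 - (1 - p) ^ ℓ ∧
    1 - (1 - p) ^ ℓ ≤ (if p < 1 / (ℓ:ℝ) then (ℓ:ℝ) * p else 1) := by
  have hℓ0 : (0:ℝ) < (ℓ:ℝ) := by exact_mod_cast hℓ
  have hexp : (0:ℝ) < Real.exp 1 := Real.exp_pos 1
  have hE : 1 / Real.exp 1 = Real.exp (-1) := by
    rw [Real.exp_neg]; ring
  have h1p : (0:ℝ) ≤ 1 - p := by linarith
  -- (1-p)^ℓ ≤ exp(-p)^ℓ = exp(-ℓ p)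
  have hsub : ∀ x : ℝ, (1 - x) ≤ Real.exp (-x) := fun x => by
    have := Real.add_one_le_exp (-x); linarith
  constructor
  · split_ifs with h
    · -- p < 1/ℓ : use geometric sum
      have hgeom : p * ∑ k ∈ Finset.range ℓ, (1 - p) ^ k = 1 - (1 - p) ^ ℓ := by
        have := geom_sum_mul (1 - p) ℓ
        nlinarith [this]
      have hq : (0:ℝ) ≤ 1 - 1/(ℓ:ℝ) := by
        have h1 : 1/(ℓ:ℝ) ≤ 1 := by
          rw [div_le_one hℓ0]; exact_mod_cast hℓ
        linarith
      have hterm : ∀ k ∈ Finset.range ℓ, (1 - 1/(ℓ:ℝ)) ^ k ≤ (1 - p) ^ k := by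
        intro k _
        exact pow_le_pow_left₀ hq (by linarith) k
      have hsum : ∑ k ∈ Finset.range ℓ, (1 - 1/(ℓ:ℝ)) ^ k ≤
          ∑ k ∈ Finset.range ℓ, (1 - p) ^ k := Finset.sum_le_sum hterm
      have hgeom2 : ∑ k ∈ Finset.range ℓ, (1 - 1/(ℓ:ℝ)) ^ k
          = (ℓ:ℝ) * (1 - (1 - 1/(ℓ:ℝ)) ^ ℓ) := by
        have := geom_sum_mul (1 - 1/(ℓ:ℝ)) ℓ
        have h2 : (∑ k ∈ Finset.range ℓ, (1 - 1/(ℓ:ℝ)) ^ k) * (-(1/(ℓ:ℝ)))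
            = (1 - 1/(ℓ:ℝ)) ^ ℓ - 1 := by
          convert this using 2; ring
        field_simp at h2 ⊢
        nlinarith [h2]
      have hqe : (1 - 1/(ℓ:ℝ)) ^ ℓ ≤ 1 / Real.exp 1 := by
        rw [hE]
        calc (1 - 1/(ℓ:ℝ)) ^ ℓ ≤ (Real.exp (-(1/(ℓ:ℝ)))) ^ ℓ :=
              pow_le_pow_left₀ hq (hsub _) ℓ
          _ = Real.exp ((ℓ:ℝ) * (-(1/(ℓ:ℝ)))) := by rw [← Real.exp_nat_mul]
          _ = Real.exp (-1) := by congr 1; field_simp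
      have : (ℓ:ℝ) * (1 - 1 / Real.exp 1) ≤ ∑ k ∈ Finset.range ℓ, (1 - p) ^ k := by
        calc (ℓ:ℝ) * (1 - 1 / Real.exp 1) ≤ (ℓ:ℝ) * (1 - (1 - 1/(ℓ:ℝ)) ^ ℓ) := by
              apply mul_le_mul_of_nonneg_left _ (le_of_lt hℓ0); linarith
          _ = _ := hgeom2.symm
          _ ≤ _ := hsum
      nlinarith [this, hgeom]
    · -- p ≥ 1/ℓ : (1-p)^ℓ ≤ 1/e
      have hp : 1/(ℓ:ℝ) ≤ p := le_of_not_gt h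
      have : (1 - p) ^ ℓ ≤ 1 / Real.exp 1 := by
        rw [hE]
        calc (1 - p) ^ ℓ ≤ (Real.exp (-p)) ^ ℓ := pow_le_pow_left₀ h1p (hsub p) ℓ
          _ = Real.exp ((ℓ:ℝ) * (-p)) := by rw [← Real.exp_nat_mul]
          _ ≤ Real.exp (-1) := by
              apply Real.exp_le_exp.mpr
              have : (1:ℝ) ≤ (ℓ:ℝ) * p := by
                rw [div_le_iff₀ hℓ0] at hp; nlinarith
              linarith
      linarith
  · split_ifs with h
    · -- Bernoulli
      have := one_add_mul_le_pow (a := -p) (by linarith) ℓ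
      have h2 : 1 + (ℓ:ℝ) * (-p) ≤ (1 - p) ^ ℓ := by
        rw [sub_eq_add_neg]; exact this
      linarith
    · have : (0:ℝ) ≤ (1 - p) ^ ℓ := pow_nonneg h1p ℓ
      linarith

theorem stmt3 (n : ℕ) (w : Fin n → ℝ) (hw : ∀ i, 0 < w i) (W : ℝ) (hW : W = ∑ i, w i)
    (ℓ : ℕ) (hℓ : 1 ≤ ℓ) (X t : ℝ)
    (hX : X = ∑ i, (1 - (1 - w i / W) ^ ℓ))
    (ht : t = ℓ * (∑ i, if w i < W / ℓ then w i / W else 0) +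
      (Nat.card {i : Fin n // 1 / (ℓ:ℝ) ≤ w i / W})) :
    (1 - 1 / Real.exp 1) * t ≤ X ∧ X ≤ t := by
  have hℓ0 : (0:ℝ) < (ℓ:ℝ) := by exact_mod_cast hℓ
  rcases Nat.eq_zero_or_pos n with hn | hn
  · subst hn
    have hX0 : X = 0 := by simpa using hX
    have ht0 : t = 0 := by
      have : Nat.card {i : Fin 0 // 1 / (ℓ:ℝ) ≤ w i / W} = 0 := by
        simp [Nat.card_eq_fintype_card]
      simp [ht, this]
    rw [hX0, ht0]; norm_num
  have hW0 : 0 < W := by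
    rw [hW]
    exact Finset.sum_pos (fun i _ => hw i) (by simp [Finset.univ_nonempty_iff, ← Fin.pos_iff_nonempty, hn])
  have hp0 : ∀ i, 0 < w i / W := fun i => div_pos (hw i) hW0
  have hp1 : ∀ i, w i / W ≤ 1 := by
    intro i
    rw [div_le_one hW0, hW]
    exact Finset.single_le_sum (fun j _ => (hw j).le) (Finset.mem_univ i)
  have hcond : ∀ i, (w i < W / ℓ) ↔ (w i / W < 1 / (ℓ:ℝ)) := by
    intro i
    rw [div_lt_div_iff₀ hW0 hℓ0, lt_div_iff₀ hℓ0]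
    constructor <;> intro h <;> nlinarith
  -- rewrite t as a sum
  have hcard : (Nat.card {i : Fin n // 1 / (ℓ:ℝ) ≤ w i / W} : ℝ)
      = ∑ i, (if w i < W / ℓ then (0:ℝ) else 1) := by
    rw [Nat.card_eq_fintype_card, Fintype.card_subtype]
    rw [Finset.card_filter]
    push_cast
    apply Finset.sum_congr rfl
    intro i _
    by_cases h : w i < W / ℓ
    · rw [if_pos h, if_neg (not_le.mpr ((hcond i).mp h))]
    · rw [if_neg h, if_pos (le_of_not_gt (fun h2 => h ((hcond i).mpr h2)))]
  have ht' : t = ∑ i, (if w i < W / ℓ then (ℓ:ℝ) * (w i / W) else 1) := by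
    rw [ht, hcard, Finset.mul_sum, ← Finset.sum_add_distrib]
    apply Finset.sum_congr rfl
    intro i _
    by_cases h : w i < W / ℓ <;> simp [h]
  have key : ∀ i : Fin n,
      (1 - 1 / Real.exp 1) * (if w i < W / ℓ then (ℓ:ℝ) * (w i / W) else 1)
        ≤ 1 - (1 - w i / W) ^ ℓ ∧
      1 - (1 - w i / W) ^ ℓ ≤ (if w i < W / ℓ then (ℓ:ℝ) * (w i / W) else 1) := by
    intro i
    have := aux_term ℓ hℓ (w i / W) (hp0 i) (hp1 i)
    have hc : (if w i < W / ℓ then (ℓ:ℝ) * (w i / W) else 1)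
        = (if w i / W < 1 / (ℓ:ℝ) then (ℓ:ℝ) * (w i / W) else 1) :=
      if_congr (hcond i) rfl rfl
    rw [hc]; exact this
  constructor
  · rw [hX, ht', Finset.mul_sum]
    exact Finset.sum_le_sum (fun i _ => (key i).1)
  · rw [hX, ht']
    exact Finset.sum_le_sum (fun i _ => (key i).2)
end

section
/- Let w_1,…,w_n be positive reals partitioned into groups G_1,…,G_u where group i contains exactly the items with weight in [a_i, 2a_i) with a_{i+1} = 2a_i. Let t_ℓ = ℓ·∑_{j: w_j < W/ℓ}(w_j/W) + |{j : w_j/W ≥ 1/ℓ}| for W = ∑ w_j. If ℓ = ⌈1/(2a_i)⌉ and ℓ' = ⌈1/(2a_{i+1})⌉ = ⌈1/(4a_i)⌉, then t_ℓ ≤ 2·t_{ℓ'} provided W is normalized so that 1/(2a_i) and 1/(4a_i) separate the groups (i.e., items in G_{i+1} have relative weight in [2a_i/W', 4a_i/W') appropriately scaled). -/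
open scoped Classical

theorem stmt7 (n : ℕ) (w : Fin n → ℝ) (hw : ∀ j, 0 < w j) (hW : ∑ j, w j = 1)
    (a : ℝ) (ha : 0 < a)
    (hgroup : ∀ j, ∃ m : ℤ, a * 2 ^ m ≤ w j ∧ w j < a * 2 ^ (m + 1))
    (t : ℕ → ℝ)
    (ht : ∀ ℓ : ℕ, t ℓ = ℓ * (∑ j, if w j < 1 / (ℓ:ℝ) then w j else 0) +
      (Nat.card {j : Fin n // 1 / (ℓ:ℝ) ≤ w j}))
    (ℓ ℓ' : ℕ) (hℓ : ℓ = ⌈1 / (2 * a)⌉₊) (hℓ' : ℓ' = ⌈1 / (4 * a)⌉₊) :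
    t ℓ ≤ 2 * t ℓ' := by
  have hl'pos : 0 < ℓ' := hℓ' ▸ Nat.ceil_pos.mpr (by positivity)
  have hlpos : 0 < ℓ := hℓ ▸ Nat.ceil_pos.mpr (by positivity)
  have hl'pos' : (0:ℝ) < ℓ' := Nat.cast_pos.mpr hl'pos
  have hlpos' : (0:ℝ) < ℓ := Nat.cast_pos.mpr hlpos
  have hmono : ℓ' ≤ ℓ := by
    rw [hℓ, hℓ']
    apply Nat.ceil_le_ceil
    apply one_div_le_one_div_of_le (by positivity)
    linarith
  have hle : (ℓ : ℝ) ≤ 2 * ℓ' := by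
    have h1 : 1 / (4 * a) ≤ (ℓ' : ℝ) := hℓ' ▸ Nat.le_ceil _
    have h2 : (1:ℝ) / (2 * a) ≤ 2 * ℓ' := by
      rw [show (1:ℝ)/(2*a) = 2 * (1/(4*a)) by field_simp; ring]
      linarith
    have : ℓ ≤ 2 * ℓ' := by
      rw [hℓ]
      exact Nat.ceil_le.mpr (by push_cast; exact h2)
    exact_mod_cast this
  have key : ∀ m : ℕ, t m = ∑ j, (if w j < 1 / (m:ℝ) then (m:ℝ) * w j else 1) := by
    intro m
    rw [ht, Finset.mul_sum, Nat.card_eq_fintype_card, Fintype.card_subtype]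
    push_cast [Finset.card_filter]
    rw [← Finset.sum_add_distrib]
    apply Finset.sum_congr rfl
    intro j _
    by_cases h : w j < ((m:ℝ))⁻¹
    · simp [h, not_le.mpr h]
    · simp [h, not_lt.mp h]
  rw [key ℓ, key ℓ', Finset.mul_sum]
  apply Finset.sum_le_sum
  intro j _
  have hinv : 1 / (ℓ:ℝ) ≤ 1 / (ℓ':ℝ) := by
    apply one_div_le_one_div_of_le hl'pos'
    exact_mod_cast hmono
  by_cases h1 : w j < 1 / (ℓ:ℝ)
  · have h2 : w j < 1 / (ℓ':ℝ) := lt_of_lt_of_le h1 hinv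
    simp only [if_pos h1, if_pos h2]
    nlinarith [hw j]
  · simp only [if_neg h1]
    by_cases h2 : w j < 1 / (ℓ':ℝ)
    · simp only [if_pos h2]
      have h3 : 1 / (ℓ:ℝ) ≤ w j := not_lt.mp h1
      have h4 : 1 / (2 * (ℓ':ℝ)) ≤ 1 / (ℓ:ℝ) := by
        apply one_div_le_one_div_of_le hlpos'
        linarith
      calc (1:ℝ) = 2 * ℓ' * (1/(2*ℓ')) := by field_simp
        _ ≤ 2 * (ℓ' * w j) := by nlinarith
    · simp only [if_neg h2]; norm_num
end

section
/- Suppose n items arrive in mini-batches of b items per PE across p PEs, each item's key drawn i.i.d. from a continuous distribution, and a PE's reservoir insertion in batch i (for i ≥ k/(bp)) occurs for each item independently with probability at most k/(i·p·b). Then the expected total number of insertions per PE over all batches i with k/(bp) ≤ i ≤ n/(bp), plus the at most k/p insertions of the initial batches, is at most (k/p)·(2 + ln(n/k)). -/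
/-!
Bounding each `X i` by `(k/p) · i⁻¹` reduces the claim to a harmonic tail estimate:
`∑_{i=a}^{c} 1/i = H_c - H_{a-1} ≤ (1 + log c) - log a`. The rounding of the batch range
only shrinks the ratio `c / a` below `n / k`, since `c ≤ n/(bp)` and `a ≥ k/(bp)`.
-/

open Finset Real

lemma harmonic_sub_harmonic_eq_sum_Ioc {m n : ℕ} (hmn : m ≤ n) :
    (harmonic n : ℝ) - harmonic m = ∑ i ∈ Ioc m n, (i : ℝ)⁻¹ := by
  have harmonic_eq_sum_Ioc (j : ℕ) : (harmonic j : ℝ) = ∑ i ∈ Ioc 0 j, (i : ℝ)⁻¹ := by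
    rw [harmonic_eq_sum_Icc, ← Icc_add_one_left_eq_Ioc]
    push_cast
    rfl
  rw [harmonic_eq_sum_Ioc, harmonic_eq_sum_Ioc, ← sum_Ioc_consecutive _ m.zero_le hmn,
    add_sub_cancel_left]

lemma sum_Icc_inv_le_one_add_log {a c : ℕ} (ha : 0 < a) (hac : a ≤ c) :
    ∑ i ∈ Icc a c, (i : ℝ)⁻¹ ≤ 1 + log (c / a) := by
  obtain ⟨m, rfl⟩ := Nat.exists_eq_add_of_lt ha
  have hc : (0 : ℝ) < c := by exact_mod_cast (show 0 < c by omega)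
  rw [zero_add, Icc_add_one_left_eq_Ioc, ← harmonic_sub_harmonic_eq_sum_Ioc (by omega),
    log_div hc.ne' (by positivity)]
  have hupper := harmonic_le_one_add_log c
  have hlower := log_add_one_le_harmonic m
  push_cast at hlower ⊢
  linarith

lemma sum_Icc_inv_le_one_add_log_of_div_le {a c : ℕ} {r : ℝ} (ha : 0 < a) (hr : 1 ≤ r)
    (hcar : (c : ℝ) / a ≤ r) : ∑ i ∈ Icc a c, (i : ℝ)⁻¹ ≤ 1 + log r := by
  have hlog : 0 ≤ log r := log_nonneg hr
  rcases le_or_gt a c with hac | hca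
  · calc ∑ i ∈ Icc a c, (i : ℝ)⁻¹ ≤ 1 + log (c / a) := sum_Icc_inv_le_one_add_log ha hac
      _ ≤ 1 + log r := by
        gcongr
        exact div_pos (by exact_mod_cast (ha.trans_le hac)) (by exact_mod_cast ha)
  · rw [Icc_eq_empty_of_lt hca, sum_empty]
    linarith

lemma Nat.floor_div_ceil_le {u v : ℝ} (hu : 0 ≤ u) (hv : 0 < v) :
    (⌊u⌋₊ : ℝ) / ⌈v⌉₊ ≤ u / v :=
  div_le_div₀ hu (Nat.floor_le hu) hv (Nat.le_ceil v)

theorem stmt10_general (n k b p : ℕ) (hk : 0 < k) (hb : 0 < b) (hp : 0 < p) (hkn : k ≤ n)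
    (hbp : b * p ≤ k)
    (X : ℕ → ℝ) (hXb : ∀ i, X i ≤ (k:ℝ) / (i * p)) :
    (k:ℝ) / p + ∑ i ∈ Finset.Icc ⌈(k:ℝ) / (b * p)⌉₊ ⌊(n:ℝ) / (b * p)⌋₊, X i
      ≤ (k:ℝ) / p * (2 + Real.log ((n:ℝ) / k)) := by
  have hbp_pos : (0 : ℝ) < b * p := by positivity
  have hk_pos : (0 : ℝ) < k := by exact_mod_cast hk
  have hfirst : 1 ≤ (k : ℝ) / (b * p) := by
    rw [one_le_div₀ hbp_pos]
    exact_mod_cast hbp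
  have hratio : (⌊(n : ℝ) / (b * p)⌋₊ : ℝ) / ⌈(k : ℝ) / (b * p)⌉₊ ≤ n / k := by
    rw [← div_div_div_cancel_right₀ hbp_pos.ne' (n : ℝ) (k : ℝ)]
    exact Nat.floor_div_ceil_le (by positivity) (by positivity)
  have hharmonic := sum_Icc_inv_le_one_add_log_of_div_le (Nat.one_le_ceil_iff.2 (by linarith))
    ((one_le_div₀ hk_pos).2 (by exact_mod_cast hkn)) hratio
  calc (k : ℝ) / p + ∑ i ∈ Icc ⌈(k : ℝ) / (b * p)⌉₊ ⌊(n : ℝ) / (b * p)⌋₊, X i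
      ≤ k / p + ∑ i ∈ Icc ⌈(k : ℝ) / (b * p)⌉₊ ⌊(n : ℝ) / (b * p)⌋₊, k / p * (i : ℝ)⁻¹ := by
        gcongr with i
        rw [← div_eq_mul_inv, div_div, mul_comm]
        exact hXb i
    _ ≤ k / p + k / p * (1 + log (n / k)) := by
        rw [← mul_sum]
        gcongr
    _ = k / p * (2 + log (n / k)) := by ring

theorem stmt10 (n k b p : ℕ) (hk : 0 < k) (hb : 0 < b) (hp : 0 < p) (hkn : k ≤ n)
    (hbp : b * p ≤ k)
    (X : ℕ → ℝ) (hX0 : ∀ i, 0 ≤ X i) (hXb : ∀ i, X i ≤ (k:ℝ) / (i * p)) :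
    (k:ℝ) / p + ∑ i ∈ Finset.Icc ⌈(k:ℝ) / (b * p)⌉₊ ⌊(n:ℝ) / (b * p)⌋₊, X i
      ≤ (k:ℝ) / p * (2 + Real.log ((n:ℝ) / k)) :=
  stmt10_general n k b p hk hb hp hkn hbp X hXb
end

section
/- Let w_1,…,w_n be nonnegative reals with sum W, partitioned into light items L = {i : w_i ≤ W/n} and heavy items H = {i : w_i > W/n}, listed in index order as ℓ[1..|L|] and h[1..|H|]. For every n' with 1 ≤ n' ≤ n there exist indices i ≥ 0 and j ≥ 0 with i + j = n', i ≤ |L|, j ≤ |H|, such that σ := ∑_{x≤i} w_{ℓ[x]} + ∑_{x≤j} w_{h[x]} ≤ n'·W/n and σ + w_{h[j+1]} > n'·W/n (where w_{h[|H|+1]} is taken to be +∞). -/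
open scoped Classical

private lemma sum_take_le_sum (l : List ℝ) (h : ∀ x ∈ l, 0 ≤ x) (a : ℕ) :
    (l.take a).sum ≤ l.sum := by
  conv_rhs => rw [← List.take_append_drop a l]
  rw [List.sum_append]
  refine le_add_of_nonneg_right (List.sum_nonneg fun x hx => h x ?_)
  exact List.mem_of_mem_drop hx

private lemma sum_take_mono (l : List ℝ) (h : ∀ x ∈ l, 0 ≤ x) {a b : ℕ} (hab : a ≤ b) :
    (l.take a).sum ≤ (l.take b).sum := by
  have h1 : l.take a = (l.take b).take a := by
    rw [List.take_take, Nat.min_eq_left hab]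
  rw [h1]
  exact sum_take_le_sum _ (fun x hx => h x (List.mem_of_mem_take hx)) a

private lemma sum_gt_of_forall_lt (c : ℝ) :
    ∀ (l : List ℝ), (∀ x ∈ l, c < x) → l ≠ [] → (l.length : ℝ) * c < l.sum := by
  intro l
  induction l with
  | nil => simp
  | cons a t ih =>
    intro h _
    have ha := h a (by simp)
    have ht : (t.length : ℝ) * c ≤ t.sum := by
      have := List.card_nsmul_le_sum t c (fun x hx => (h x (by simp [hx])).le)
      simpa [nsmul_eq_mul] using this
    simp only [List.sum_cons, List.length_cons]
    push_cast
    nlinarith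

theorem stmt14 (n : ℕ) (w : Fin n → ℝ) (hw : ∀ i, 0 ≤ w i) (W : ℝ) (hW : W = ∑ i, w i)
    (lightL heavyL : List (Fin n))
    (hlight : lightL = (List.finRange n).filter (fun i => decide (w i ≤ W / n)))
    (hheavy : heavyL = (List.finRange n).filter (fun i => decide (W / n < w i))) :
    ∀ n' : ℕ, 1 ≤ n' → n' ≤ n →
      ∃ i j : ℕ, i + j = n' ∧ i ≤ lightL.length ∧ j ≤ heavyL.length ∧
        ((lightL.take i).map w).sum + ((heavyL.take j).map w).sum ≤ n' * W / n ∧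
        (∀ hj : j < heavyL.length,
          (n':ℝ) * W / n <
            ((lightL.take i).map w).sum + ((heavyL.take j).map w).sum + w (heavyL.get ⟨j, hj⟩)) := by
  intro n' hn'1 hn'n
  have hn : 0 < n := lt_of_lt_of_le hn'1 hn'n
  have hnR : (0:ℝ) < n := by exact_mod_cast hn
  set c : ℝ := W / n with hc
  have htarget : (n':ℝ) * W / n = n' * c := by rw [hc, mul_div_assoc]
  -- membership facts
  have hLmem : ∀ x ∈ lightL, w x ≤ c := by
    intro x hx; rw [hlight, List.mem_filter] at hx
    simpa using hx.2
  have hHmem : ∀ x ∈ heavyL, c < w x := by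
    intro x hx; rw [hheavy, List.mem_filter] at hx
    simpa using hx.2
  -- heavy is the negated filter
  have hheavy' : heavyL = (List.finRange n).filter (fun i => !(decide (w i ≤ W / n))) := by
    rw [hheavy]
    apply List.filter_congr
    intro x _
    rw [← decide_not, decide_eq_decide]
    exact not_le.symm
  have hperm : (lightL ++ heavyL).Perm (List.finRange n) := by
    rw [hlight, hheavy']
    exact List.filter_append_perm _ _
  have hlen : lightL.length + heavyL.length = n := by
    have := hperm.length_eq
    simpa [List.length_append] using this
  have hsum : (lightL.map w).sum + (heavyL.map w).sum = W := by
    have := ((hperm.map w).sum_eq)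
    rw [List.map_append, List.sum_append] at this
    rw [this, hW, Fin.sum_univ_def]
  -- nonnegativity of mapped lists
  have hLnn : ∀ x ∈ lightL.map w, (0:ℝ) ≤ x := by
    rintro x hx
    obtain ⟨y, -, rfl⟩ := List.mem_map.1 hx
    exact hw y
  have hHnn : ∀ x ∈ heavyL.map w, (0:ℝ) ≤ x := by
    rintro x hx
    obtain ⟨y, -, rfl⟩ := List.mem_map.1 hx
    exact hw y
  -- the running sum
  set S : ℕ → ℝ := fun j => ((lightL.map w).take (n' - j)).sum + ((heavyL.map w).take j).sum
    with hS
  have hSeq : ∀ i j : ℕ, ((lightL.take i).map w).sum + ((heavyL.take j).map w).sum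
      = ((lightL.map w).take i).sum + ((heavyL.map w).take j).sum := by
    intro i j
    rw [List.map_take, List.map_take]
  set P : ℕ → Prop := fun j => S j ≤ (n':ℝ) * c with hP
  set j0 : ℕ := n' - lightL.length with hj0
  have hj0H : j0 ≤ heavyL.length := by omega
  have hj0n' : j0 ≤ n' := by omega
  -- P j0 holds
  have hPj0 : P j0 := by
    rcases le_or_gt n' lightL.length with hle | hlt
    · -- j0 = 0
      have hj0z : j0 = 0 := by omega
      rw [hP, hS, hj0z]
      simp only [List.take_zero, List.sum_nil, add_zero, Nat.sub_zero]
      have h1 : ((lightL.map w).take n').sum ≤ c * ((lightL.map w).take n').length := by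
        have := List.sum_le_card_nsmul ((lightL.map w).take n') c
          (fun x hx => by
            obtain ⟨y, hy, rfl⟩ := List.mem_map.1 (List.mem_of_mem_take hx)
            exact hLmem y hy)
        simpa [nsmul_eq_mul, mul_comm] using this
      have h2 : ((lightL.map w).take n').length = n' := by
        simp [List.length_take]
        omega
      rw [h2] at h1
      linarith [h1]
    · -- j0 = n' - |L| ≥ 1, take all of lightL
      have htk : (lightL.map w).take (n' - j0) = lightL.map w := by
        apply List.take_of_length_le
        simp [hj0]
        omega
      rw [hP, hS]
      simp only [htk]
      -- split heavy into take j0 and drop j0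
      have hsplit : ((heavyL.map w).take j0).sum + ((heavyL.map w).drop j0).sum
          = (heavyL.map w).sum := by
        rw [← List.sum_append, List.take_append_drop]
      have hdroplen : ((heavyL.map w).drop j0).length = n - n' := by
        simp [List.length_drop]
        omega
      have hdropge : ((n:ℝ) - n') * c ≤ ((heavyL.map w).drop j0).sum := by
        have := List.card_nsmul_le_sum ((heavyL.map w).drop j0) c
          (fun x hx => by
            obtain ⟨y, hy, rfl⟩ := List.mem_map.1 (List.mem_of_mem_drop hx)
            exact (hHmem y hy).le)
        rw [hdroplen] at this
        have hcast : ((n - n' : ℕ) : ℝ) = (n:ℝ) - n' := by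
          push_cast [Nat.cast_sub hn'n]; ring
        simpa [nsmul_eq_mul, hcast] using this
      have hWc : W = (n:ℝ) * c := by
        rw [hc]; field_simp
      nlinarith [hsum, hdropge, hsplit]
  set m : ℕ := min n' heavyL.length with hm
  have hj0m : j0 ≤ m := by omega
  set j : ℕ := Nat.findGreatest P m with hj
  have hjm : j ≤ m := Nat.findGreatest_le m
  have hPj : P j := Nat.findGreatest_spec hj0m hPj0
  have hj0j : j0 ≤ j := Nat.le_findGreatest hj0m hPj0
  refine ⟨n' - j, j, by omega, by omega, by omega, ?_, ?_⟩
  · rw [hSeq, htarget]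
    exact hPj
  · intro hjH
    -- first, j < n'
    have hjn' : j < n' := by
      by_contra hcon
      have hjeq : j = n' := by omega
      have hn'H : n' ≤ heavyL.length := by omega
      have : ((n':ℝ)) * c < ((heavyL.map w).take n').sum := by
        have hlen' : ((heavyL.map w).take n').length = n' := by
          simp [List.length_take]; omega
        have hne : (heavyL.map w).take n' ≠ [] := by
          apply List.ne_nil_of_length_pos
          omega
        have := sum_gt_of_forall_lt c ((heavyL.map w).take n')
          (fun x hx => by
            obtain ⟨y, hy, rfl⟩ := List.mem_map.1 (List.mem_of_mem_take hx)
            exact hHmem y hy) hne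
        rwa [hlen'] at this
      have hPj' := hPj
      rw [hP, hS, hjeq] at hPj'
      simp only [Nat.sub_self, List.take_zero, List.sum_nil, zero_add] at hPj'
      linarith
    have hj1m : j + 1 ≤ m := by omega
    have hnP : ¬ P (j + 1) := Nat.findGreatest_is_greatest (by omega) hj1m
    rw [hP, hS] at hnP
    push_neg at hnP
    -- S (j+1) ≤ S j - (light term) + heavy new element
    have hsucc : ((heavyL.map w).take (j + 1)).sum
        = ((heavyL.map w).take j).sum + w (heavyL.get ⟨j, hjH⟩) := by
      have hjlen : j < (heavyL.map w).length := by simpa using hjH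
      have := List.sum_take_succ (heavyL.map w) j hjlen
      rw [this]
      congr 1
      simp [List.getElem_map]
    have hmono : ((lightL.map w).take (n' - (j + 1))).sum
        ≤ ((lightL.map w).take (n' - j)).sum :=
      sum_take_mono _ hLnn (by omega)
    rw [hsucc] at hnP
    rw [hSeq, htarget]
    linarith
end

section
/- Let w_1,…,w_n be nonnegative reals summing to W. There exists an assignment (alias table) of values w'_i ∈ [0, w_i] and aliases a_i ∈ {1,…,n} such that for every bucket i, w'_i + (weight assigned to bucket i from item a_i) = W/n, each bucket receives weight from at most one alias, and the total weight assigned to item j across all buckets equals w_j. -/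
/-!
Induct on the set of buckets, with target bucket level `t` and total weight `#s * t`. By averaging
there is an item `i` with `u i ≤ t` and an item `j` with `t ≤ u j`. Bucket `i` keeps all of `u i`
and is topped up by `t - u i` taken from `j`; removing `i` and lowering `u j` by `t - u i` leaves
`#s - 1` nonnegative items of total weight `(#s - 1) * t`, to which the induction hypothesis applies.
-/

open Finset Function

variable {ι : Type*} [DecidableEq ι]

/-- Bucket `i` of capacity `t` holds the part `w' i` of item `i` and the part `c i` of item
`a i`. -/
structure IsAliasTable (s : Finset ι) (t : ℝ) (u w' c : ι → ℝ) (a : ι → ι) : Prop where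
  own_nonneg : ∀ i ∈ s, 0 ≤ w' i
  own_le : ∀ i ∈ s, w' i ≤ u i
  alias_nonneg : ∀ i ∈ s, 0 ≤ c i
  own_add_alias : ∀ i ∈ s, w' i + c i = t
  alias_mem : ∀ i ∈ s, a i ∈ s
  total_eq : ∀ j ∈ s, w' j + ∑ i ∈ s with a i = j, c i = u j

theorem sum_filter_update_insert {M : Type*} [AddCommMonoid M] {s : Finset ι} {i : ι}
    (hi : i ∉ s) (a : ι → ι) (c : ι → M) (j k : ι) (d : M) :
    ∑ l ∈ insert i s with update a i j l = k, update c i d l =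
      (if j = k then d else 0) + ∑ l ∈ s with a l = k, c l := by
  rw [sum_filter, sum_filter, sum_insert hi, update_self, update_self]
  congr 1
  refine sum_congr rfl fun l hl => ?_
  have hli : l ≠ i := ne_of_mem_of_not_mem hl hi
  rw [update_of_ne hli, update_of_ne hli]

theorem IsAliasTable.insert {s : Finset ι} {t : ℝ} {u w' c : ι → ℝ} {a : ι → ι} {i j : ι}
    (hi : i ∉ s) (hj : j ∈ insert i s) (hui : 0 ≤ u i) (huit : u i ≤ t) (hujt : t ≤ u j)
    (T : IsAliasTable s t (fun k => u k - if k = j then t - u i else 0) w' c a) :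
    IsAliasTable (insert i s) t u (update w' i (u i)) (update c i (t - u i)) (update a i j) := by
  have mem_ne {k : ι} (hk : k ∈ s) : k ≠ i := ne_of_mem_of_not_mem hk hi
  refine ⟨?_, ?_, ?_, ?_, ?_, ?_⟩ <;> intro k hk <;> rcases mem_insert.mp hk with rfl | hk
  · simpa using hui
  · simpa [mem_ne hk] using T.own_nonneg k hk
  · simp
  · have h := T.own_le k hk
    simp only [update_of_ne (mem_ne hk)] at h ⊢
    split_ifs at h <;> linarith
  · simpa using sub_nonneg.mpr huit
  · simpa [mem_ne hk] using T.alias_nonneg k hk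
  · simp
  · simpa [mem_ne hk] using T.own_add_alias k hk
  · simpa using hj
  · simpa [mem_ne hk] using mem_insert_of_mem (T.alias_mem k hk)
  · have no_alias : ∑ l ∈ s with a l = k, c l = 0 :=
      sum_eq_zero fun l hl => absurd ((mem_filter.mp hl).2 ▸ T.alias_mem l (mem_filter.mp hl).1) hi
    rw [sum_filter_update_insert hi, no_alias, update_self]
    split_ifs with hjk
    · subst hjk; linarith
    · simp
  · have h := T.total_eq k hk
    rw [sum_filter_update_insert hi, update_of_ne (mem_ne hk)]
    simp only [eq_comm (a := j)] at h ⊢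
    split_ifs at h ⊢ <;> linarith

theorem exists_isAliasTable (t : ℝ) (s : Finset ι) (u : ι → ℝ) (hu : ∀ i ∈ s, 0 ≤ u i)
    (hsum : ∑ i ∈ s, u i = #s * t) :
    ∃ (w' c : ι → ℝ) (a : ι → ι), IsAliasTable s t u w' c a := by
  induction s using Finset.strongInduction generalizing u with
  | H s ih =>
  rcases s.eq_empty_or_nonempty with rfl | hs
  · exact ⟨0, 0, id, by constructor <;> simp⟩
  have hsum_const : ∑ _k ∈ s, t = ∑ k ∈ s, u k := by simp [hsum]
  obtain ⟨i, his, huit⟩ := exists_le_of_sum_le hs hsum_const.symm.le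
  obtain ⟨j, hjs, hujt⟩ := exists_le_of_sum_le hs hsum_const.le
  set u' : ι → ℝ := fun k => u k - if k = j then t - u i else 0
  have hu' : ∀ k ∈ s.erase i, 0 ≤ u' k := fun k hk => by
    have := hu k (mem_of_mem_erase hk)
    simp only [u']
    split_ifs with hkj
    · subst hkj; linarith [hu i his]
    · linarith
  have hsum' : ∑ k ∈ s.erase i, u' k = #(s.erase i) * t := by
    have htransfer : ∑ k ∈ s.erase i, (if k = j then t - u i else 0) = t - u i := by
      rw [sum_ite_eq']
      split_ifs with hj'
      · rfl
      · have hji : j = i := by simpa [hjs] using hj'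
        subst hji; linarith
    have hsplit := sum_erase_add s u his
    simp only [u', sum_sub_distrib, htransfer, card_erase_of_mem his,
      Nat.cast_sub (card_pos.mpr hs), Nat.cast_one]
    linarith
  obtain ⟨w', c, a, T⟩ := ih _ (erase_ssubset his) u' hu' hsum'
  have T' := T.insert (notMem_erase i s) (by rwa [insert_erase his]) (hu i his) huit hujt
  rw [insert_erase his] at T'
  exact ⟨_, _, _, T'⟩

theorem stmt15_general (n : ℕ) (w : Fin n → ℝ) (hw : ∀ i, 0 ≤ w i)
    (W : ℝ) (hW : W = ∑ i, w i) :
    ∃ (w' c : Fin n → ℝ) (a : Fin n → Fin n),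
      (∀ i, 0 ≤ w' i ∧ w' i ≤ w i ∧ 0 ≤ c i ∧ w' i + c i = W / n) ∧
      (∀ j, w' j + ∑ i ∈ Finset.univ.filter (fun i => a i = j), c i = w j) := by
  have hsum : ∑ i, w i = #(univ : Finset (Fin n)) * (W / n) := by
    rcases eq_or_ne n 0 with rfl | hn
    · simp
    · rw [card_univ, Fintype.card_fin, hW]
      field_simp
  obtain ⟨w', c, a, T⟩ := exists_isAliasTable (W / n) univ w (fun i _ => hw i) hsum
  exact ⟨w', c, a, fun i => ⟨T.own_nonneg i (mem_univ i), T.own_le i (mem_univ i),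
    T.alias_nonneg i (mem_univ i), T.own_add_alias i (mem_univ i)⟩,
    fun j => T.total_eq j (mem_univ j)⟩

theorem stmt15 (n : ℕ) (hn : 0 < n) (w : Fin n → ℝ) (hw : ∀ i, 0 ≤ w i)
    (W : ℝ) (hW : W = ∑ i, w i) :
    ∃ (w' c : Fin n → ℝ) (a : Fin n → Fin n),
      (∀ i, 0 ≤ w' i ∧ w' i ≤ w i ∧ 0 ≤ c i ∧ w' i + c i = W / n) ∧
      (∀ j, w' j + ∑ i ∈ Finset.univ.filter (fun i => a i = j), c i = w j) :=
  stmt15_general n w hw W hW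
end

section
/- Let w_1, …, w_n ∈ (0,1] be inclusion probabilities with W = ∑ w_i, and partition items into buckets B_i = {j : 2^{-(i+1)} ≤ w_j ≤ 2^{-i}} for i = 0,…,L-1 with L = ⌈log₂ n⌉, and B_L = {j : w_j ≤ 2^{-L}}. In bucket i < L, rejection sampling with proposal weight w̄_i = max_{j∈B_i} w_j accepts each proposed item with probability w_j/w̄_i ≥ 1/2; hence the expected number of proposals needed to produce the accepted items of bucket i is at most twice the expected output size of that bucket, and the expected total number of proposals over buckets 0..L-1 is at most 2·∑_{i<L} ∑_{j∈B_i} w_j ≤ 2W. -/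
open scoped Classical

/-!
Every weight of bucket `i` lies in `(c / 2, c]` with `c = 2⁻ⁱ`, so the bucket maximum is at most
twice each of its weights. The buckets are preimages of the pairwise disjoint dyadic intervals
`(2⁻⁽ⁱ⁺¹⁾, 2⁻ⁱ]`, so their weight sums add up to at most `W`.
-/

open Finset Function

lemma Finset.sup'_div_two_le_of_forall_mem_Ioc {ι K : Type*} [Field K] [LinearOrder K]
    [IsStrictOrderedRing K] {s : Finset ι} (hne : s.Nonempty) {f : ι → K} {c : K}
    (hs : ∀ k ∈ s, f k ∈ Set.Ioc (c / 2) c) {j : ι} (hj : j ∈ s) : s.sup' hne f / 2 ≤ f j := by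
  have hsup : s.sup' hne f ≤ c := sup'_le hne f fun k hk => (hs k hk).2
  linarith [(hs j hj).1]

lemma pairwise_disjoint_Ioc_inv_two_pow :
    Pairwise (Disjoint on fun i : ℕ => Set.Ioc ((2 : ℝ) ^ (i + 1))⁻¹ ((2 : ℝ) ^ i)⁻¹) :=
  Antitone.pairwise_disjoint_on_Ioc_succ (f := fun i : ℕ => ((2 : ℝ) ^ i)⁻¹)
    fun _ _ h => inv_anti₀ (by positivity) (pow_le_pow_right₀ one_le_two h)

lemma Finset.sum_sum_le_univ_sum_of_pairwiseDisjoint {ι α M : Type*} [Fintype α]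
    [AddCommMonoid M] [PartialOrder M] [IsOrderedAddMonoid M] {s : Finset ι} {B : ι → Finset α}
    (hB : (s : Set ι).PairwiseDisjoint B) {f : α → M} (hf : ∀ j, 0 ≤ f j) :
    ∑ i ∈ s, ∑ j ∈ B i, f j ≤ ∑ j, f j := by
  rw [← sum_biUnion hB]
  exact sum_le_univ_sum_of_nonneg hf

theorem stmt18_general (n : ℕ) (w : Fin n → ℝ) (hw : ∀ j, 0 < w j ∧ w j ≤ 1)
    (L : ℕ)
    (B : ℕ → Finset (Fin n))
    (hB : ∀ i, B i =
      Finset.univ.filter (fun j => ((2:ℝ) ^ (i + 1))⁻¹ < w j ∧ w j ≤ ((2:ℝ) ^ i)⁻¹)) :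
    (∀ i, i < L → ∀ hne : (B i).Nonempty, ∀ j ∈ B i, (B i).sup' hne w / 2 ≤ w j) ∧
    (∑ i ∈ Finset.range L, 2 * ∑ j ∈ B i, w j) ≤ 2 * ∑ j, w j := by
  have hmem : ∀ i, ∀ j ∈ B i, w j ∈ Set.Ioc ((2 : ℝ) ^ (i + 1))⁻¹ ((2 : ℝ) ^ i)⁻¹ := by
    intro i j hj
    simpa [hB] using hj
  refine ⟨fun i _ hne j hj =>
    sup'_div_two_le_of_forall_mem_Ioc (c := ((2 : ℝ) ^ i)⁻¹) hne (fun k hk => ?_) hj, ?_⟩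
  · rw [div_eq_mul_inv, ← mul_inv, ← pow_succ]
    exact hmem i k hk
  · have hdisj : ((range L : Finset ℕ) : Set ℕ).PairwiseDisjoint B := fun i _ k _ hik =>
      Finset.disjoint_left.2 fun j hji hjk =>
        Set.disjoint_left.1 (pairwise_disjoint_Ioc_inv_two_pow hik) (hmem i j hji) (hmem k j hjk)
    rw [← mul_sum]
    gcongr
    exact sum_sum_le_univ_sum_of_pairwiseDisjoint hdisj fun j => (hw j).1.le

theorem stmt18 (n : ℕ) (hn : 0 < n) (w : Fin n → ℝ) (hw : ∀ j, 0 < w j ∧ w j ≤ 1)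
    (L : ℕ) (hL : L = Nat.clog 2 n)
    (B : ℕ → Finset (Fin n))
    (hB : ∀ i, B i =
      Finset.univ.filter (fun j => ((2:ℝ) ^ (i + 1))⁻¹ < w j ∧ w j ≤ ((2:ℝ) ^ i)⁻¹)) :
    (∀ i, i < L → ∀ hne : (B i).Nonempty, ∀ j ∈ B i, (B i).sup' hne w / 2 ≤ w j) ∧
    (∑ i ∈ Finset.range L, 2 * ∑ j ∈ B i, w j) ≤ 2 * ∑ j, w j :=
  stmt18_general n w hw L B hB
end
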